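/- arXiv:2301.00206 — 3 statements merged into one kernel-verified Lean document; each statement's English description precedes it below -/
import Mathlib

section
/- Let f : ℝ → ℝ, f(z) = z|z|^{2ℓ} for an integer ℓ ≥ 1. Then for every δ > 0 and 0 < δ* < δ there exists σ > 0 such that for all z*, z ∈ [−δ, δ] with |z − z*| ≥ δ*, one has |f(z) − f(z*)| ≥ σ |z − z*|^{2ℓ+1}. -/
lemma odd_pow_sub_nonneg (n : ℕ) (hne : n ≠ 0) (x y : ℝ) (hx : 0 ≤ x) (h : x ≤ y) :
    ((y - x) / 2) ^ n ≤ y ^ n - x ^ n := by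
  have h1 : x ^ n + ((y - x) / 2) ^ n ≤ (x + (y - x) / 2) ^ n :=
    pow_add_pow_le hx (by linarith) hne
  have h2 : (x + (y - x) / 2) ^ n ≤ y ^ n :=
    pow_le_pow_left₀ (by linarith) (by linarith) n
  linarith

lemma odd_pow_sub_aux (ℓ : ℕ) (x y : ℝ) (h : x ≤ y) :
    ((y - x) / 2) ^ (2 * ℓ + 1) ≤ y ^ (2 * ℓ + 1) - x ^ (2 * ℓ + 1) := by
  set n := 2 * ℓ + 1 with hn
  have hodd : Odd n := ⟨ℓ, by omega⟩
  have hne : n ≠ 0 := by omega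
  rcases le_or_gt 0 x with hx | hx
  · exact odd_pow_sub_nonneg n hne x y hx h
  · rcases le_or_gt y 0 with hy | hy
    · have h1 := odd_pow_sub_nonneg n hne (-y) (-x) (by linarith) (by linarith)
      rw [hodd.neg_pow, hodd.neg_pow] at h1
      have heq : ((-x) - (-y)) / 2 = (y - x) / 2 := by ring
      rw [heq] at h1; linarith
    · have hxn : 0 < (-x) ^ n := pow_pos (by linarith) n
      have hyn : 0 < y ^ n := pow_pos hy n
      have hxn' : (-x) ^ n = - x ^ n := hodd.neg_pow x
      rcases le_total y (-x) with hc | hc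
      · have : ((y - x) / 2) ^ n ≤ (-x) ^ n :=
          pow_le_pow_left₀ (by linarith) (by linarith) n
        linarith
      · have : ((y - x) / 2) ^ n ≤ y ^ n :=
          pow_le_pow_left₀ (by linarith) (by linarith) n
        linarith

/-- For `f(z) = z|z|^{2ℓ}` with `ℓ ≥ 1`, for every `δ > 0` and `0 < δ* < δ` there is
`σ > 0` such that `|f(z) - f(z*)| ≥ σ|z - z*|^{2ℓ+1}` whenever `z, z* ∈ [-δ, δ]` and
`|z - z*| ≥ δ*`. -/
theorem holder_lower_bound_for_odd_power (ℓ : ℕ) (hℓ : 1 ≤ ℓ) (δ δs : ℝ)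
    (hδ : 0 < δ) (hδs0 : 0 < δs) (hδs : δs < δ) :
    ∃ σ : ℝ, 0 < σ ∧ ∀ z ∈ Set.Icc (-δ) δ, ∀ zs ∈ Set.Icc (-δ) δ, δs ≤ |z - zs| →
      σ * |z - zs| ^ (2 * ℓ + 1) ≤ |z * |z| ^ (2 * ℓ) - zs * |zs| ^ (2 * ℓ)| := by
  set n := 2 * ℓ + 1 with hn
  refine ⟨(1 / 2) ^ n, pow_pos (by norm_num) n, ?_⟩
  intro z _ zs _ _
  have heven : Even (2 * ℓ) := ⟨ℓ, by omega⟩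
  have habs : ∀ w : ℝ, w * |w| ^ (2 * ℓ) = w ^ n := by
    intro w
    rw [heven.pow_abs, hn, pow_succ, mul_comm]
  rw [habs, habs]
  have key : ∀ a b : ℝ, b ≤ a →
      (1 / 2) ^ n * |a - b| ^ n ≤ |a ^ n - b ^ n| := by
    intro a b hba
    have h1 := odd_pow_sub_aux ℓ b a hba
    have h2 : (0:ℝ) ≤ ((a - b) / 2) ^ n := pow_nonneg (by linarith) n
    rw [abs_of_nonneg (by linarith : (0:ℝ) ≤ a - b),
        abs_of_nonneg (by linarith : (0:ℝ) ≤ a ^ n - b ^ n)]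
    calc (1 / 2) ^ n * (a - b) ^ n = ((a - b) / 2) ^ n := by
          rw [← mul_pow]; ring_nf
      _ ≤ a ^ n - b ^ n := h1
  rcases le_total zs z with h | h
  · exact key z zs h
  · have := key zs z h
    rwa [abs_sub_comm z zs, abs_sub_comm (z ^ n)]
end

section
/- Let (μ_ν)_{ν≥0} be a sequence of positive reals with μ_ν ≤ μ*^{1/2}/2^ν for some μ* ∈ (0,1), and let Φ_ν be maps with |Φ_ν − id| ≤ μ_ν in supremum norm and Lipschitz constant of Φ_ν bounded by 1 + μ_ν (on appropriate nested domains). Then the compositions Ψ^ν = Φ₀∘Φ₁∘⋯∘Φ_ν satisfy |Ψ^i − Ψ^{i−1}| ≤ e² μ*^{1/2}/2^i for all i ≥ 1, and hence (Ψ^ν) converges uniformly. -/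
/-- Convergence of the KAM composition scheme: if `μ_ν ≤ √μ*/2^ν` with `μ* ∈ (0,1)`,
`‖Φ_ν - id‖ ≤ μ_ν` in sup norm, each `Φ_ν` is Lipschitz with constant `1 + μ_ν`, and
`Ψ^ν = Φ₀∘Φ₁∘⋯∘Φ_ν`, then `‖Ψ^i - Ψ^{i-1}‖ ≤ e²√μ*/2^i` for all `i ≥ 1`, and the
`Ψ^ν` converge uniformly. -/
theorem kam_compositions_converge_uniformly {V : Type*} [NormedAddCommGroup V]
    [NormedSpace ℝ V] [CompleteSpace V]
    (μs : ℝ) (hμs0 : 0 < μs) (hμs1 : μs < 1)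
    (μ : ℕ → ℝ) (hμpos : ∀ ν, 0 < μ ν) (hμ : ∀ ν, μ ν ≤ Real.sqrt μs / 2 ^ ν)
    (Φ : ℕ → V → V)
    (hΦ : ∀ ν, ∀ x, ‖Φ ν x - x‖ ≤ μ ν)
    (hLip : ∀ ν, LipschitzWith (Real.toNNReal (1 + μ ν)) (Φ ν))
    (Ψ : ℕ → V → V) (hΨ0 : Ψ 0 = Φ 0) (hΨrec : ∀ ν, Ψ (ν + 1) = Ψ ν ∘ Φ (ν + 1)) :
    (∀ i : ℕ, 1 ≤ i → ∀ x, ‖Ψ i x - Ψ (i - 1) x‖ ≤ Real.exp 2 * Real.sqrt μs / 2 ^ i) ∧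
      ∃ g : V → V, TendstoUniformly Ψ g Filter.atTop := by
  have hsqrt_lt : Real.sqrt μs < 1 := by
    rw [show (1:ℝ) = Real.sqrt 1 from (Real.sqrt_one).symm]
    exact Real.sqrt_lt_sqrt hμs0.le hμs1
  have hsqrt_pos : 0 < Real.sqrt μs := Real.sqrt_pos.mpr hμs0
  -- Lipschitz bound in real form
  have hLipR : ∀ ν x y, ‖Φ ν x - Φ ν y‖ ≤ (1 + μ ν) * ‖x - y‖ := by
    intro ν x y
    have := (hLip ν).dist_le_mul x y
    rw [dist_eq_norm, dist_eq_norm] at this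
    calc ‖Φ ν x - Φ ν y‖ ≤ ((Real.toNNReal (1 + μ ν) : NNReal) : ℝ) * ‖x - y‖ := this
      _ = (1 + μ ν) * ‖x - y‖ := by
          rw [Real.coe_toNNReal _ (by linarith [hμpos ν] : (0:ℝ) ≤ 1 + μ ν)]
  -- partial sums of μ are ≤ 2
  have hsum : ∀ n : ℕ, ∑ k ∈ Finset.range (n + 1), μ k ≤ 2 := by
    intro n
    calc ∑ k ∈ Finset.range (n + 1), μ k
        ≤ ∑ k ∈ Finset.range (n + 1), Real.sqrt μs * (1/2) ^ k := by
          apply Finset.sum_le_sum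
          intro k _
          calc μ k ≤ Real.sqrt μs / 2 ^ k := hμ k
            _ = Real.sqrt μs * (1/2) ^ k := by rw [div_pow, one_pow]; ring
      _ = Real.sqrt μs * ∑ k ∈ Finset.range (n + 1), (1/2 : ℝ) ^ k := by
          rw [Finset.mul_sum]
      _ ≤ 1 * 2 := by
          apply mul_le_mul hsqrt_lt.le _ (Finset.sum_nonneg fun k _ => by positivity)
            zero_le_one
          rw [geom_sum_eq (by norm_num : (1/2:ℝ) ≠ 1)]
          have h0 : (0:ℝ) ≤ (1/2:ℝ) ^ (n+1) := by positivity
          rw [div_le_iff_of_neg (by norm_num : (1/2:ℝ) - 1 < 0)]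
          nlinarith
      _ = 2 := by norm_num
  -- Ψ n is Lipschitz with constant exp 2
  have hΨLip : ∀ n x y, ‖Ψ n x - Ψ n y‖ ≤ Real.exp 2 * ‖x - y‖ := by
    have key : ∀ n x y,
        ‖Ψ n x - Ψ n y‖ ≤ (∏ k ∈ Finset.range (n + 1), (1 + μ k)) * ‖x - y‖ := by
      intro n
      induction n with
      | zero =>
        intro x y
        rw [hΨ0]
        simpa using hLipR 0 x y
      | succ n ih =>
        intro x y
        rw [hΨrec n]
        simp only [Function.comp_apply]
        calc ‖Ψ n (Φ (n+1) x) - Ψ n (Φ (n+1) y)‖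
            ≤ (∏ k ∈ Finset.range (n + 1), (1 + μ k)) * ‖Φ (n+1) x - Φ (n+1) y‖ :=
              ih _ _
          _ ≤ (∏ k ∈ Finset.range (n + 1), (1 + μ k)) * ((1 + μ (n+1)) * ‖x - y‖) := by
              apply mul_le_mul_of_nonneg_left (hLipR (n+1) x y)
              exact Finset.prod_nonneg fun k _ => by linarith [hμpos k]
          _ = (∏ k ∈ Finset.range (n + 2), (1 + μ k)) * ‖x - y‖ := by
              rw [Finset.prod_range_succ (fun k => 1 + μ k) (n+1)]; ring
    intro n x y
    refine (key n x y).trans (mul_le_mul_of_nonneg_right ?_ (norm_nonneg _))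
    calc ∏ k ∈ Finset.range (n + 1), (1 + μ k)
        ≤ ∏ k ∈ Finset.range (n + 1), Real.exp (μ k) :=
          Finset.prod_le_prod (fun k _ => by linarith [hμpos k])
            (fun k _ => by linarith [Real.add_one_le_exp (μ k)])
      _ = Real.exp (∑ k ∈ Finset.range (n + 1), μ k) := (Real.exp_sum _ _).symm
      _ ≤ Real.exp 2 := Real.exp_le_exp.mpr (hsum n)
  -- main difference bound
  have hdiff : ∀ i : ℕ, 1 ≤ i → ∀ x,
      ‖Ψ i x - Ψ (i - 1) x‖ ≤ Real.exp 2 * Real.sqrt μs / 2 ^ i := by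
    intro i hi x
    obtain ⟨n, rfl⟩ := Nat.exists_eq_add_of_le hi
    have h1 : 1 + n - 1 = n := by omega
    rw [h1, show 1 + n = n + 1 from by omega, hΨrec n]
    simp only [Function.comp_apply]
    calc ‖Ψ n (Φ (n+1) x) - Ψ n x‖
        ≤ Real.exp 2 * ‖Φ (n+1) x - x‖ := by
          have := hΨLip n (Φ (n+1) x) x
          exact this
      _ ≤ Real.exp 2 * (Real.sqrt μs / 2 ^ (n+1)) :=
          mul_le_mul_of_nonneg_left ((hΦ (n+1) x).trans (hμ (n+1)))
            (Real.exp_pos 2).le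
      _ = Real.exp 2 * Real.sqrt μs / 2 ^ (n+1) := by ring
  refine ⟨hdiff, ?_⟩
  set C : ℝ := Real.exp 2 * Real.sqrt μs with hC
  have hCpos : 0 < C := by positivity
  -- Cauchy estimate
  have hcauchy : ∀ x n k, ‖Ψ (n + k) x - Ψ n x‖ ≤ C * ((1/2)^n - (1/2)^(n+k)) := by
    intro x n k
    induction k with
    | zero => simp
    | succ k ih =>
      have step : ‖Ψ (n + k + 1) x - Ψ (n + k) x‖ ≤ C * (1/2) ^ (n + k + 1) := by
        have := hdiff (n + k + 1) (by omega) x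
        rw [show n + k + 1 - 1 = n + k from by omega] at this
        calc ‖Ψ (n + k + 1) x - Ψ (n + k) x‖ ≤ C / 2 ^ (n + k + 1) := this
          _ = C * (1/2) ^ (n + k + 1) := by rw [div_pow, one_pow]; ring
      calc ‖Ψ (n + (k+1)) x - Ψ n x‖
          ≤ ‖Ψ (n + k + 1) x - Ψ (n + k) x‖ + ‖Ψ (n + k) x - Ψ n x‖ := by
            rw [show n + (k+1) = n + k + 1 from by omega]
            exact norm_sub_le_norm_sub_add_norm_sub _ _ _
        _ ≤ C * (1/2) ^ (n + k + 1) + C * ((1/2)^n - (1/2)^(n+k)) :=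
            add_le_add step ih
        _ = C * ((1/2)^n - (1/2)^(n + (k+1))) := by
            rw [show n + (k+1) = (n + k) + 1 from by omega, pow_succ]
            ring
  have hcauchy' : ∀ x n k, ‖Ψ (n + k) x - Ψ n x‖ ≤ C * (1/2)^n := by
    intro x n k
    refine (hcauchy x n k).trans ?_
    have : (0:ℝ) ≤ (1/2)^(n+k) := by positivity
    nlinarith
  -- pointwise Cauchy, hence pointwise limit
  have hptCauchy : ∀ x, CauchySeq (fun n => Ψ n x) := by
    intro x
    apply cauchySeq_of_le_geometric (r := 1/2) (C := C) (by norm_num)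
    intro n
    rw [dist_eq_norm, norm_sub_rev]
    simpa using hcauchy' x n 1
  choose g hg using fun x => cauchySeq_tendsto_of_complete (hptCauchy x)
  refine ⟨g, ?_⟩
  rw [← tendstoUniformlyOn_univ]
  apply UniformCauchySeqOn.tendstoUniformlyOn_of_tendsto _ (fun x _ => hg x)
  rw [Metric.uniformCauchySeqOn_iff]
  intro ε hε
  obtain ⟨N, hN⟩ := exists_pow_lt_of_lt_one (div_pos hε hCpos) (by norm_num : (1/2:ℝ) < 1)
  refine ⟨N, fun m hm n hn x _ => ?_⟩
  have key : ∀ a b : ℕ, N ≤ a → a ≤ b → dist (Ψ b x) (Ψ a x) < ε := by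
    intro a b ha hab
    obtain ⟨k, rfl⟩ := Nat.exists_eq_add_of_le hab
    rw [dist_eq_norm]
    calc ‖Ψ (a + k) x - Ψ a x‖ ≤ C * (1/2)^a := hcauchy' x a k
      _ ≤ C * (1/2)^N := by
          apply mul_le_mul_of_nonneg_left _ hCpos.le
          exact pow_le_pow_of_le_one (by norm_num) (by norm_num) ha
      _ < C * (ε / C) := by
          exact mul_lt_mul_of_pos_left hN hCpos
      _ = ε := by field_simp
  rcases le_total m n with h | h
  · rw [dist_comm]; exact key m n hm h
  · exact key n m hn h
end

section
/- Let O ⊂ ℝ^N be a bounded open set, ζ ∈ O, and let G, R : cl(O) → ℝ^N be continuous with: deg(G, O, 0) ≠ 0, 0 ∉ G(∂O), |G(z)| ≥ σ|z − ζ|^L for all z ∈ cl(O) (with σ > 0, L ≥ 1), and sup|R| < σ δ^L/2 where δ = dist(ζ, ∂O). If moreover sup|R| ≤ (σ/2) ε^L for some 0 < ε < δ, then there exists ζ₊ ∈ B_ε(ζ) with G(ζ₊) + R(ζ₊) = 0. -/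
/-- An axiomatization of the Brouwer topological degree `deg f Ω y` for continuous maps
on bounded open subsets of a real normed space, recording its standard properties:
solvability, vanishing off the image, homotopy invariance, stability under boundary
perturbations, excision, invariance along paths avoiding `f(∂Ω)`, and Borsuk's theorem. -/
structure BrouwerDegree (V : Type*) [NormedAddCommGroup V] [NormedSpace ℝ V] where
  deg : (V → V) → Set V → V → ℤ
  solvable : ∀ (f : V → V) (Ω : Set V) (y : V), IsOpen Ω → Bornology.IsBounded Ω →
    ContinuousOn f (closure Ω) → (∀ x ∈ frontier Ω, f x ≠ y) →
    deg f Ω y ≠ 0 → ∃ x ∈ Ω, f x = y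
  deg_eq_zero_of_not_mem : ∀ (f : V → V) (Ω : Set V) (y : V), IsOpen Ω →
    Bornology.IsBounded Ω → ContinuousOn f (closure Ω) →
    y ∉ f '' closure Ω → deg f Ω y = 0
  homotopy_invariance : ∀ (H : ℝ → V → V) (Ω : Set V) (y : V), IsOpen Ω →
    Bornology.IsBounded Ω → Continuous (fun p : ℝ × V => H p.1 p.2) →
    (∀ t ∈ Set.Icc (0:ℝ) 1, ∀ x ∈ frontier Ω, H t x ≠ y) →
    deg (H 0) Ω y = deg (H 1) Ω y
  stability : ∀ (f g : V → V) (Ω : Set V) (y : V), IsOpen Ω → Bornology.IsBounded Ω →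
    ContinuousOn f (closure Ω) → ContinuousOn g (closure Ω) →
    (∀ x ∈ frontier Ω, ‖f x - g x‖ < ‖g x - y‖) → deg f Ω y = deg g Ω y
  excision : ∀ (f : V → V) (Ω Ω' : Set V) (y : V), IsOpen Ω → Bornology.IsBounded Ω →
    IsOpen Ω' → Ω' ⊆ Ω → ContinuousOn f (closure Ω) →
    (∀ x ∈ closure Ω \ Ω', f x ≠ y) → deg f Ω y = deg f Ω' y
  deg_const_path : ∀ (f : V → V) (Ω : Set V) (p : ℝ → V), IsOpen Ω →
    Bornology.IsBounded Ω → ContinuousOn f (closure Ω) → Continuous p →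
    (∀ t ∈ Set.Icc (0:ℝ) 1, p t ∉ f '' frontier Ω) →
    deg f Ω (p 0) = deg f Ω (p 1)
  borsuk : ∀ (f : V → V) (Ω : Set V), IsOpen Ω → Bornology.IsBounded Ω → (0 : V) ∈ Ω →
    (∀ x ∈ Ω, -x ∈ Ω) → ContinuousOn f (closure Ω) → (∀ x, f (-x) = -f x) →
    (∀ x ∈ frontier Ω, f x ≠ 0) → deg f Ω 0 ≠ 0

/-- The translation step (Lemma 3.3 abstracted): let `O ⊂ ℝ^N` be bounded open, `ζ ∈ O`,
`G, R` continuous on `cl(O)` with `deg(G, O, 0) ≠ 0`, `0 ∉ G(∂O)`,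
`|G(z)| ≥ σ|z - ζ|^L` on `cl(O)`, `sup|R| < σδ^L/2` where `δ = dist(ζ, ∂O)`, and
`sup|R| ≤ (σ/2)ε^L` for some `0 < ε < δ`. Then `G + R` has a zero in `B_ε(ζ)`. -/
theorem zero_of_perturbed_map_near_center {N : ℕ}
    (D : BrouwerDegree (EuclideanSpace ℝ (Fin N)))
    (O : Set (EuclideanSpace ℝ (Fin N))) (hO : IsOpen O) (hOb : Bornology.IsBounded O)
    (ζ : EuclideanSpace ℝ (Fin N)) (hζ : ζ ∈ O)
    (G R : EuclideanSpace ℝ (Fin N) → EuclideanSpace ℝ (Fin N))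
    (hG : ContinuousOn G (closure O)) (hR : ContinuousOn R (closure O))
    (σ L : ℝ) (hσ : 0 < σ) (hL : 1 ≤ L)
    (hdeg : D.deg G O 0 ≠ 0)
    (hbd : ∀ x ∈ frontier O, G x ≠ 0)
    (hlow : ∀ z ∈ closure O, σ * ‖z - ζ‖ ^ L ≤ ‖G z‖)
    (δ : ℝ) (hδ : δ = Metric.infDist ζ (frontier O))
    (hRsmall : ∀ z ∈ closure O, ‖R z‖ < σ * δ ^ L / 2)
    (ε : ℝ) (hε0 : 0 < ε) (hεδ : ε < δ)
    (hRε : ∀ z ∈ closure O, ‖R z‖ ≤ σ / 2 * ε ^ L) :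
    ∃ ζp ∈ Metric.ball ζ ε, G ζp + R ζp = 0 := by
  classical
  have hζcl : ζ ∈ closure O := subset_closure hζ
  -- δ is positive
  have hδL : 0 < σ * δ ^ L / 2 := lt_of_le_of_lt (norm_nonneg _) (hRsmall ζ hζcl)
  have hδnn : 0 ≤ δ := hδ ▸ Metric.infDist_nonneg
  have hδpos : 0 < δ := by
    rcases hδnn.lt_or_eq with h | h
    · exact h
    · exfalso
      rw [← h, Real.zero_rpow (by linarith : L ≠ 0)] at hδL
      simp at hδL
  have hεnn : 0 ≤ ε := hε0.le
  -- the ball B_δ(ζ) is contained in O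
  have hOne : O ≠ Set.univ := by
    intro h
    have : frontier O = ∅ := by rw [h]; simp
    rw [hδ, this, Metric.infDist_empty] at hδpos
    exact lt_irrefl _ hδpos
  have hballδ : Metric.ball ζ δ ⊆ O := by
    obtain ⟨y, hy, hyd⟩ := exists_mem_frontier_infDist_compl_eq_dist hζ hOne
    have h1 : δ ≤ Metric.infDist ζ Oᶜ := by
      rw [hyd]; rw [hδ]; exact Metric.infDist_le_dist_of_mem hy
    exact (Metric.ball_subset_ball h1).trans Metric.ball_infDist_compl_subset
  have hballε : Metric.ball ζ ε ⊆ O := fun x hx =>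
    hballδ (Metric.ball_subset_ball hεδ.le hx)
  -- lower bounds for ‖G‖
  have hGfr : ∀ x ∈ frontier O, σ * δ ^ L ≤ ‖G x‖ := by
    intro x hx
    have hxd : δ ≤ ‖x - ζ‖ := by
      rw [hδ]
      calc Metric.infDist ζ (frontier O) ≤ dist ζ x := Metric.infDist_le_dist_of_mem hx
        _ = ‖x - ζ‖ := by rw [dist_comm, dist_eq_norm]
    have := hlow x (frontier_subset_closure hx)
    have hpow : δ ^ L ≤ ‖x - ζ‖ ^ L := Real.rpow_le_rpow hδnn hxd (by linarith)
    nlinarith [this]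
  -- stability: deg (G+R) O 0 = deg G O 0
  have hGR : ContinuousOn (fun z => G z + R z) (closure O) := hG.add hR
  have hstep1 : D.deg (fun z => G z + R z) O 0 = D.deg G O 0 := by
    apply D.stability _ _ _ _ hO hOb hGR hG
    intro x hx
    have h1 := hRsmall x (frontier_subset_closure hx)
    have h2 := hGfr x hx
    have : (fun z => G z + R z) x - G x = R x := add_sub_cancel_left (G x) (R x)
    rw [this, sub_zero]
    linarith
  -- excision to the small ball
  have hnozero : ∀ x ∈ closure O \ Metric.ball ζ ε, (fun z => G z + R z) x ≠ 0 := by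
    rintro x ⟨hxcl, hxb⟩
    have hxd : ε ≤ ‖x - ζ‖ := by
      have := Metric.mem_ball.not.mp hxb
      push_neg at this
      calc ε ≤ dist x ζ := this
        _ = ‖x - ζ‖ := dist_eq_norm x ζ
    have hpow : ε ^ L ≤ ‖x - ζ‖ ^ L := Real.rpow_le_rpow hεnn hxd (by linarith)
    have h1 := hlow x hxcl
    have h2 := hRε x hxcl
    have hεL : 0 < ε ^ L := Real.rpow_pos_of_pos hε0 L
    have hGx : σ * ε ^ L ≤ ‖G x‖ := by nlinarith
    intro h
    have : G x = - R x := by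
      have := congrArg (fun v => v - R x) h
      simpa [add_sub_cancel_right] using this
    rw [this, norm_neg] at hGx
    nlinarith
  have hstep2 : D.deg (fun z => G z + R z) O 0 =
      D.deg (fun z => G z + R z) (Metric.ball ζ ε) 0 :=
    D.excision _ _ _ _ hO hOb Metric.isOpen_ball hballε hGR hnozero
  -- solve on the ball
  have hdegball : D.deg (fun z => G z + R z) (Metric.ball ζ ε) 0 ≠ 0 := by
    rw [← hstep2, hstep1]; exact hdeg
  have hclball : closure (Metric.ball ζ ε) ⊆ closure O := closure_mono hballε
  obtain ⟨x, hx, hfx⟩ := D.solvable (fun z => G z + R z) (Metric.ball ζ ε) 0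
    Metric.isOpen_ball (Metric.isBounded_ball) (hGR.mono hclball)
    (fun x hx => hnozero x ⟨hclball (frontier_subset_closure hx), fun h => hx.2 (by rwa [Metric.isOpen_ball.interior_eq])⟩)
    hdegball
  exact ⟨x, hx, hfx⟩
end
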